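/- Let u : 𝔻 → ℂ be given by u(z) = (1/2π)∫₀^{2π} K₂(z·e^{-iθ})·u*(e^{iθ}) dθ for some measurable u* : 𝕋 → ℂ with |u*(e^{iθ})| ≤ 1 for all θ (this is the Poisson-type representation of a T₂-harmonic map of 𝔻 into the closed unit disk). Then for all z ∈ 𝔻, |u(z) - ((1-|z|²)³/(1+|z|²)²)·u(0)| ≤ (2/π)·[(1+|z|²)·arctan|z| + |z|(1-|z|²)/(1+|z|²)]. -/

import Mathlib

open Real MeasureTheory

/-- The kernel `K₂(z) = (1/2)·(1-|z|²)³/|1-z|⁴`. -/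
noncomputable def K2ker (z : ℂ) : ℝ :=
  (1 - ‖z‖ ^ 2) ^ 3 / (2 * ‖1 - z‖ ^ 4)

/-- The harmonic Poisson kernel `P(z) = (1-|z|²)/|1-z|²`. -/
noncomputable def Pker (z : ℂ) : ℝ :=
  (1 - ‖z‖ ^ 2) / ‖1 - z‖ ^ 2

/-- The biharmonic Green function `G(z,w)`. -/
noncomputable def Gker (z w : ℂ) : ℝ :=
  ‖z - w‖ ^ 2 *
      Real.log (‖(1 - z * (starRingEnd ℂ) w) / (z - w)‖ ^ 2)
    - (1 - ‖z‖ ^ 2) * (1 - ‖w‖ ^ 2)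

/-- Poisson integral `P[φ](z)`. -/
noncomputable def Pint (φ : ℂ → ℂ) (z : ℂ) : ℂ :=
  (1 / (2 * Real.pi)) *
    ∫ θ in (0:ℝ)..(2 * Real.pi),
      (Pker (z * Complex.exp (-(θ:ℂ) * Complex.I)) : ℂ) * φ (Complex.exp ((θ:ℂ) * Complex.I))

/-- The integral operator `K₂[φ](z)`. -/
noncomputable def K2int (φ : ℂ → ℂ) (z : ℂ) : ℂ :=
  (1 / (2 * Real.pi)) *
    ∫ θ in (0:ℝ)..(2 * Real.pi),
      (K2ker (z * Complex.exp (-(θ:ℂ) * Complex.I)) : ℂ) * φ (Complex.exp ((θ:ℂ) * Complex.I))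

/-- The Green potential `G[g](z) = (1/16)∫_𝔻 G(z,w) g(w) dA(w)`. -/
noncomputable def Gint (g : ℂ → ℂ) (z : ℂ) : ℂ :=
  (1 / 16) * ∫ w in Metric.ball (0:ℂ) 1, (Gker z w : ℂ) * g w

/-- Wirtinger derivative `f_z = (1/2)(f_x - i f_y)`. -/
noncomputable def wderivZ (f : ℂ → ℂ) (z : ℂ) : ℂ :=
  (1 / 2) * (fderiv ℝ f z 1 - Complex.I * fderiv ℝ f z Complex.I)

/-- Wirtinger derivative `f_{z̄} = (1/2)(f_x + i f_y)`. -/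
noncomputable def wderivZbar (f : ℂ → ℂ) (z : ℂ) : ℂ :=
  (1 / 2) * (fderiv ℝ f z 1 + Complex.I * fderiv ℝ f z Complex.I)

/-- Sup norm over the unit circle. -/
noncomputable def normInfCircle (f : ℂ → ℂ) : ℝ :=
  sSup ((fun ζ => ‖f ζ‖) '' {ζ : ℂ | ‖ζ‖ = 1})

/-- Sup norm over the unit disk. -/
noncomputable def normInfDisk (g : ℂ → ℂ) : ℝ :=
  sSup ((fun ζ => ‖g ζ‖) '' Metric.ball (0:ℂ) 1)

/-- The explicit solution `Φ` of the inhomogeneous biharmonic Dirichlet problem. -/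
noncomputable def solPhi (f h g : ℂ → ℂ) (z : ℂ) : ℂ :=
  (((1 - ‖z‖ ^ 2) / 2 : ℝ) : ℂ) * Pint (fun ζ => f ζ + h ζ) z
    + K2int f z - Gint g z

/-!
The constant `K₂(0) = 1/2` reproduces the mean of `u*`, so
`u(z) - (1-r²)³/(1+r²)² · u(0)` (with `r = |z|`) is the integral of `u*` against
`K₂(z e^{-iθ}) - (1-r²)³/(2(1+r²)²)`. In polar form `K₂(r e^{iθ})` is an increasing function of
`r cos θ`, and the subtracted constant is its value at `cos θ = 0`; so the difference kernel is
positive on one half circle and negative on the other, and `|u*| ≤ 1` bounds the left side by its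
`L¹` norm. That norm is computed from the explicit antiderivative
`(1+r²) arctan((1+r)/(1-r) · tan(θ/2)) + r(1-r²) sin θ / (1 - 2r cos θ + r²)` of `K₂(r e^{iθ})`
on `(-π, π)`; the half circle `cos θ ≤ 0` is brought into that range by `θ ↦ θ + π`, which turns
`r` into `-r`.
-/

noncomputable def k2Polar (r θ : ℝ) : ℝ :=
  (1 - r ^ 2) ^ 3 / (2 * (1 - 2 * r * cos θ + r ^ 2) ^ 2)

lemma one_sub_two_mul_cos_add_sq_pos {r : ℝ} (hr : |r| < 1) (θ : ℝ) :
    0 < 1 - 2 * r * cos θ + r ^ 2 := by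
  have hcos : r * cos θ ≤ |r| := (le_abs_self _).trans <| by
    rw [abs_mul]; exact mul_le_of_le_one_right (abs_nonneg r) (abs_cos_le_one θ)
  nlinarith [sq_abs r, sq_nonneg (1 - |r|)]

lemma norm_one_sub_ofReal_mul_exp_sq (r θ : ℝ) :
    ‖1 - (r : ℂ) * Complex.exp (θ * Complex.I)‖ ^ 2 = 1 - 2 * r * cos θ + r ^ 2 := by
  rw [← Complex.normSq_eq_norm_sq, Complex.normSq_apply]
  simp only [Complex.sub_re, Complex.one_re, Complex.re_ofReal_mul, Complex.exp_ofReal_mul_I_re,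
    Complex.sub_im, Complex.one_im, Complex.im_ofReal_mul, Complex.exp_ofReal_mul_I_im]
  linear_combination r ^ 2 * sin_sq_add_cos_sq θ

lemma K2ker_ofReal_mul_exp (r θ : ℝ) :
    K2ker (r * Complex.exp (θ * Complex.I)) = k2Polar r θ := by
  have hnorm : ‖(r : ℂ) * Complex.exp (θ * Complex.I)‖ = |r| := by simp [Complex.norm_exp]
  rw [K2ker, k2Polar, hnorm, sq_abs, show (4 : ℕ) = 2 * 2 from rfl, pow_mul,
    norm_one_sub_ofReal_mul_exp_sq]

lemma K2ker_mul_exp_neg (z : ℂ) (θ : ℝ) :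
    K2ker (z * Complex.exp (-θ * Complex.I)) = k2Polar ‖z‖ (Complex.arg z - θ) := by
  conv_lhs => rw [← Complex.norm_mul_exp_arg_mul_I z]
  rw [mul_assoc, ← Complex.exp_add, ← K2ker_ofReal_mul_exp]
  push_cast
  ring_nf

lemma K2ker_zero : K2ker 0 = 1 / 2 := by
  norm_num [K2ker]

lemma continuous_k2Polar {r : ℝ} (hr : |r| < 1) : Continuous (k2Polar r) :=
  continuous_const.div (by fun_prop) fun θ ↦
    (pow_pos (one_sub_two_mul_cos_add_sq_pos hr θ) 2).ne' |> mul_ne_zero two_ne_zero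

lemma periodic_k2Polar (r : ℝ) : Function.Periodic (k2Polar r) (2 * π) := by
  intro θ
  simp only [k2Polar, cos_add_two_pi]

lemma k2Polar_add_pi (r θ : ℝ) : k2Polar r (θ + π) = k2Polar (-r) θ := by
  simp only [k2Polar, cos_add_pi]
  ring_nf

lemma k2Polar_le_k2Polar {r θ θ' : ℝ} (hr : |r| < 1) (h : r * cos θ ≤ r * cos θ') :
    k2Polar r θ ≤ k2Polar r θ' := by
  have hnum : 0 ≤ (1 - r ^ 2) ^ 3 := pow_nonneg (by nlinarith [sq_abs r, abs_nonneg r]) 3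
  have hd' := one_sub_two_mul_cos_add_sq_pos hr θ'
  refine div_le_div_of_nonneg_left hnum (by positivity) ?_
  exact mul_le_mul_of_nonneg_left (pow_le_pow_left₀ hd'.le (by linarith) 2) zero_le_two

noncomputable def k2Primitive (r t : ℝ) : ℝ :=
  (1 + r ^ 2) * arctan ((1 + r) / (1 - r) * tan (t / 2))
    + r * (1 - r ^ 2) * (sin t / (1 - 2 * r * cos t + r ^ 2))

lemma hasDerivAt_arctan_mul_tan_half (a : ℝ) {θ : ℝ} (hθ : cos (θ / 2) ≠ 0) :
    HasDerivAt (fun t ↦ arctan (a * tan (t / 2)))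
      (a / (1 + cos θ + a ^ 2 * (1 - cos θ))) θ := by
  have hhalf : HasDerivAt (fun t : ℝ ↦ t / 2) (1 / 2) θ := by
    simpa using (hasDerivAt_id θ).div_const 2
  refine ((hasDerivAt_arctan _).comp θ
    (((hasDerivAt_tan hθ).comp θ hhalf).const_mul a)).congr_deriv ?_
  have hden :
      1 + cos θ + a ^ 2 * (1 - cos θ) = 2 * (cos (θ / 2) ^ 2 + (a * sin (θ / 2)) ^ 2) := by
    have hcos : cos θ = 2 * cos (θ / 2) ^ 2 - 1 := by
      rw [← cos_two_mul, mul_div_cancel₀ θ two_ne_zero]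
    linear_combination (1 - a ^ 2) * hcos - 2 * a ^ 2 * sin_sq_add_cos_sq (θ / 2)
  have hpos : 0 < cos (θ / 2) ^ 2 + (a * sin (θ / 2)) ^ 2 := by
    have := pow_pos (abs_pos.mpr hθ) 2
    rw [sq_abs] at this
    positivity
  rw [Function.comp_apply, tan_eq_sin_div_cos, hden]
  field_simp

lemma hasDerivAt_sin_div_one_sub_two_mul_cos_add_sq {r : ℝ} (hr : |r| < 1) (θ : ℝ) :
    HasDerivAt (fun t ↦ sin t / (1 - 2 * r * cos t + r ^ 2))
      ((cos θ * (1 + r ^ 2) - 2 * r) / (1 - 2 * r * cos θ + r ^ 2) ^ 2) θ := by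
  have hden : HasDerivAt (fun t ↦ 1 - 2 * r * cos t + r ^ 2) (2 * r * sin θ) θ := by
    refine (((hasDerivAt_cos θ).const_mul (2 * r)).const_sub 1 |>.add_const (r ^ 2)).congr_deriv
      ?_
    ring
  refine ((hasDerivAt_sin θ).div hden (one_sub_two_mul_cos_add_sq_pos hr θ).ne').congr_deriv ?_
  congr 1
  linear_combination (-2 * r) * sin_sq_add_cos_sq θ

lemma hasDerivAt_k2Primitive {r θ : ℝ} (hr : |r| < 1) (hθ : θ ∈ Set.Ioo (-π) π) :
    HasDerivAt (k2Primitive r) (k2Polar r θ) θ := by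
  have hcos : 0 < cos (θ / 2) := cos_pos_of_mem_Ioo ⟨by linarith [hθ.1], by linarith [hθ.2]⟩
  have h1r : 1 - r ≠ 0 := by linarith [(abs_lt.mp hr).2]
  have hd := one_sub_two_mul_cos_add_sq_pos hr θ
  set d := 1 - 2 * r * cos θ + r ^ 2 with hd_def
  have harctan : (1 + r) / (1 - r) / (1 + cos θ + ((1 + r) / (1 - r)) ^ 2 * (1 - cos θ))
      = (1 - r ^ 2) / (2 * d) := by
    have hX : 1 + cos θ + ((1 + r) / (1 - r)) ^ 2 * (1 - cos θ) = 2 * d / (1 - r) ^ 2 := by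
      field_simp
      ring
    rw [hX]
    field_simp
    ring
  refine (((hasDerivAt_arctan_mul_tan_half _ hcos.ne').const_mul (1 + r ^ 2)).add
    ((hasDerivAt_sin_div_one_sub_two_mul_cos_add_sq hr θ).const_mul (r * (1 - r ^ 2)))).congr_deriv
    ?_
  rw [harctan, k2Polar, ← hd_def]
  field_simp
  ring

lemma integral_k2Polar_neg_pi_div_two_pi_div_two {r : ℝ} (hr : |r| < 1) :
    ∫ θ in -(π / 2)..π / 2, k2Polar r θ
      = 2 * ((1 + r ^ 2) * arctan ((1 + r) / (1 - r)) + r * (1 - r ^ 2) / (1 + r ^ 2)) := by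
  have hderiv :
      ∀ θ ∈ Set.uIcc (-(π / 2)) (π / 2), HasDerivAt (k2Primitive r) (k2Polar r θ) θ := by
    intro θ hθ
    rw [Set.uIcc_of_le (by linarith [pi_pos])] at hθ
    exact hasDerivAt_k2Primitive hr ⟨by linarith [hθ.1, pi_pos], by linarith [hθ.2, pi_pos]⟩
  rw [intervalIntegral.integral_eq_sub_of_hasDerivAt hderiv
    ((continuous_k2Polar hr).intervalIntegrable _ _)]
  simp only [k2Primitive, neg_div, div_div, show π / (2 * 2) = π / 4 by ring, tan_neg,
    tan_pi_div_four, sin_neg, cos_neg, sin_pi_div_two, cos_pi_div_two, mul_neg, mul_one, mul_zero,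
    sub_zero, arctan_neg]
  ring

lemma arctan_one_add_div_one_sub {r : ℝ} (hr : r < 1) :
    arctan ((1 + r) / (1 - r)) = π / 4 + arctan r := by
  rw [← arctan_one, arctan_add (by linarith), one_mul]

lemma integral_abs_k2Polar_sub_k2Polar_pi_div_two {r : ℝ} (h0 : 0 ≤ r) (h1 : r < 1) :
    ∫ θ in (0)..2 * π, |k2Polar r θ - k2Polar r (π / 2)|
      = 4 * ((1 + r ^ 2) * arctan r + r * (1 - r ^ 2) / (1 + r ^ 2)) := by
  have hr : |r| < 1 := abs_lt.mpr ⟨by linarith, h1⟩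
  have hr' : |-r| < 1 := by rwa [abs_neg]
  have hpi := pi_pos
  set c := k2Polar r (π / 2)
  have hk := continuous_k2Polar hr
  have hf : Continuous fun θ ↦ |k2Polar r θ - c| := (hk.sub continuous_const).abs
  have hshift : ∫ θ in (0)..2 * π, |k2Polar r θ - c|
      = ∫ θ in -(π / 2)..3 * π / 2, |k2Polar r θ - c| := by
    have := ((periodic_k2Polar r).comp fun x ↦ |x - c|).intervalIntegral_add_eq 0 (-(π / 2))
    rw [zero_add, show -(π / 2) + 2 * π = 3 * π / 2 by ring] at this
    exact this
  have hfirst : ∫ θ in -(π / 2)..π / 2, |k2Polar r θ - c|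
      = ∫ θ in -(π / 2)..π / 2, (k2Polar r θ - c) := by
    refine intervalIntegral.integral_congr fun θ hθ ↦ abs_of_nonneg (sub_nonneg.mpr ?_)
    rw [Set.uIcc_of_le (by linarith)] at hθ
    refine k2Polar_le_k2Polar hr ?_
    rw [cos_pi_div_two, mul_zero]
    exact mul_nonneg h0 (cos_nonneg_of_mem_Icc hθ)
  have hsecond : ∫ θ in π / 2..3 * π / 2, |k2Polar r θ - c|
      = ∫ θ in π / 2..3 * π / 2, (c - k2Polar r θ) := by
    refine intervalIntegral.integral_congr fun θ hθ ↦ ?_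
    rw [Set.uIcc_of_le (by linarith)] at hθ
    rw [abs_sub_comm]
    refine abs_of_nonneg (sub_nonneg.mpr (k2Polar_le_k2Polar hr ?_))
    rw [cos_pi_div_two, mul_zero]
    exact mul_nonpos_of_nonneg_of_nonpos h0
      (cos_nonpos_of_pi_div_two_le_of_le hθ.1 (by linarith [hθ.2]))
  have htranslate :
      ∫ θ in π / 2..3 * π / 2, k2Polar r θ = ∫ θ in -(π / 2)..π / 2, k2Polar (-r) θ := by
    simp only [← k2Polar_add_pi]
    rw [intervalIntegral.integral_comp_add_right (k2Polar r) π]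
    ring_nf
  rw [hshift, ← intervalIntegral.integral_add_adjacent_intervals (b := π / 2)
    (hf.intervalIntegrable _ _) (hf.intervalIntegrable _ _), hfirst, hsecond,
    intervalIntegral.integral_sub (hk.intervalIntegrable _ _) intervalIntegrable_const,
    intervalIntegral.integral_sub intervalIntegrable_const (hk.intervalIntegrable _ _), htranslate,
    integral_k2Polar_neg_pi_div_two_pi_div_two hr, integral_k2Polar_neg_pi_div_two_pi_div_two hr',
    intervalIntegral.integral_const, intervalIntegral.integral_const,
    arctan_one_add_div_one_sub h1, arctan_one_add_div_one_sub (by linarith : -r < 1), arctan_neg]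
  simp only [smul_eq_mul]
  ring

lemma norm_integral_comp_sub_mul_le {g : ℝ → ℝ} {T : ℝ} (hg : Continuous g)
    (hper : Function.Periodic g T) (hT : 0 ≤ T) {v : ℝ → ℂ} (hv : ∀ θ, ‖v θ‖ ≤ 1) (α : ℝ) :
    ‖∫ θ in (0)..T, (g (α - θ) : ℂ) * v θ‖ ≤ ∫ θ in (0)..T, |g θ| := calc
  _ ≤ ∫ θ in (0)..T, |g (α - θ)| := by
    refine intervalIntegral.norm_integral_le_of_norm_le hT (ae_of_all _ fun θ _ ↦ ?_)
      ((hg.comp (continuous_sub_left α)).abs.intervalIntegrable _ _)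
    rw [norm_mul, Complex.norm_real, Real.norm_eq_abs]
    exact mul_le_of_le_one_right (abs_nonneg _) (hv θ)
  _ = ∫ θ in (0)..T, |g θ| := by
    rw [intervalIntegral.integral_comp_sub_left (fun s ↦ |g s|) α, sub_zero,
      ← sub_add_cancel α T, add_sub_cancel_right]
    simpa using (hper.comp abs).intervalIntegral_add_eq (α - T) 0

lemma K2int_sub_mul_K2int_zero {φ : ℂ → ℂ}
    (hφ : IntervalIntegrable (fun θ : ℝ ↦ φ (Complex.exp (θ * Complex.I))) volume 0 (2 * π))
    (z : ℂ) (hz : ‖z‖ < 1) :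
    K2int φ z - (((1 - ‖z‖ ^ 2) ^ 3 / (1 + ‖z‖ ^ 2) ^ 2 : ℝ) : ℂ) * K2int φ 0
      = 1 / (2 * π) * ∫ θ in (0)..2 * π,
          ((k2Polar ‖z‖ (Complex.arg z - θ) - k2Polar ‖z‖ (π / 2) : ℝ) : ℂ)
            * φ (Complex.exp (θ * Complex.I)) := by
  have hr : |‖z‖| < 1 := by rwa [abs_norm]
  have hc : k2Polar ‖z‖ (π / 2) = (1 - ‖z‖ ^ 2) ^ 3 / (1 + ‖z‖ ^ 2) ^ 2 * K2ker 0 := by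
    rw [K2ker_zero, k2Polar, cos_pi_div_two, mul_zero, sub_zero]
    field_simp
  have hker : IntervalIntegrable (fun θ : ℝ ↦ (k2Polar ‖z‖ (Complex.arg z - θ) : ℂ)
      * φ (Complex.exp (θ * Complex.I))) volume 0 (2 * π) :=
    hφ.continuousOn_mul (Complex.continuous_ofReal.comp
      ((continuous_k2Polar hr).comp (continuous_sub_left _))).continuousOn
  have hsplit :
      ∫ θ in (0)..2 * π, ((k2Polar ‖z‖ (Complex.arg z - θ) - k2Polar ‖z‖ (π / 2) : ℝ) : ℂ)
        * φ (Complex.exp (θ * Complex.I))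
      = (∫ θ in (0)..2 * π,
          (k2Polar ‖z‖ (Complex.arg z - θ) : ℂ) * φ (Complex.exp (θ * Complex.I)))
        - (((1 - ‖z‖ ^ 2) ^ 3 / (1 + ‖z‖ ^ 2) ^ 2 : ℝ) : ℂ)
          * ∫ θ in (0)..2 * π, (K2ker 0 : ℂ) * φ (Complex.exp (θ * Complex.I)) := by
    rw [← intervalIntegral.integral_const_mul, ← intervalIntegral.integral_sub hker
      ((hφ.const_mul _).const_mul _), hc]
    congr 1
    ext θ
    push_cast
    ring
  simp only [K2int, zero_mul, K2ker_mul_exp_neg, hsplit]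
  ring

lemma norm_K2int_sub_mul_K2int_zero_le {φ : ℂ → ℂ} (hφ : Measurable φ)
    (hbd : ∀ θ : ℝ, ‖φ (Complex.exp (θ * Complex.I))‖ ≤ 1) {z : ℂ} (hz : ‖z‖ < 1) :
    ‖K2int φ z - (((1 - ‖z‖ ^ 2) ^ 3 / (1 + ‖z‖ ^ 2) ^ 2 : ℝ) : ℂ) * K2int φ 0‖
      ≤ 2 / π * ((1 + ‖z‖ ^ 2) * arctan ‖z‖ + ‖z‖ * (1 - ‖z‖ ^ 2) / (1 + ‖z‖ ^ 2)) := by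
  have hr : |‖z‖| < 1 := by rwa [abs_norm]
  have hpi := pi_pos
  have hint : IntervalIntegrable (fun θ : ℝ ↦ φ (Complex.exp (θ * Complex.I))) volume 0 (2 * π) :=
    intervalIntegrable_const.mono_fun'
      (hφ.comp (by fun_prop)).aestronglyMeasurable (ae_of_all _ hbd)
  rw [K2int_sub_mul_K2int_zero hint z hz, norm_mul]
  calc ‖(1 / (2 * π) : ℂ)‖ * _
      ≤ 1 / (2 * π) * ∫ θ in (0)..2 * π, |k2Polar ‖z‖ θ - k2Polar ‖z‖ (π / 2)| := by
        rw [show ‖(1 / (2 * π) : ℂ)‖ = 1 / (2 * π) by simp [abs_of_pos hpi]]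
        gcongr
        exact norm_integral_comp_sub_mul_le (g := fun θ ↦ k2Polar ‖z‖ θ - k2Polar ‖z‖ (π / 2))
          ((continuous_k2Polar hr).sub continuous_const)
          (fun θ ↦ by simp only [periodic_k2Polar _ θ]) (by positivity) hbd _
    _ = _ := by
        rw [integral_abs_k2Polar_sub_k2Polar_pi_div_two (norm_nonneg z) hz]
        field_simp
        ring

/-- Schwarz-type lemma for `T₂`-harmonic functions (Theorem 1.1). -/
theorem stmt1 (u ustar : ℂ → ℂ) (hmeas : Measurable ustar)
    (hbd : ∀ θ : ℝ, ‖ustar (Complex.exp ((θ:ℂ) * Complex.I))‖ ≤ 1)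
    (hu : ∀ z : ℂ, ‖z‖ < 1 →
      u z = (1 / (2 * Real.pi)) *
        ∫ θ in (0:ℝ)..(2 * Real.pi),
          (K2ker (z * Complex.exp (-(θ:ℂ) * Complex.I)) : ℂ) *
            ustar (Complex.exp ((θ:ℂ) * Complex.I)))
    (z : ℂ) (hz : ‖z‖ < 1) :
    ‖u z -
        (((1 - ‖z‖ ^ 2) ^ 3 / (1 + ‖z‖ ^ 2) ^ 2 : ℝ) : ℂ) * u 0‖
      ≤ (2 / Real.pi) * ((1 + ‖z‖ ^ 2) * Real.arctan (‖z‖)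
          + ‖z‖ * (1 - ‖z‖ ^ 2) / (1 + ‖z‖ ^ 2)) := by
  rw [hu z hz, hu 0 (by simp)]
  exact norm_K2int_sub_mul_K2int_zero_le hmeas hbd hz
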